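/- Define f : ℝ² → ℝ² on real points by f(x₁,x₂) = ((x₁² − x₂²)/2, log |x₁x₂ + 1|). Then the restriction of f to the connected component S = {(x₁,x₂) ∈ ℝ² : x₁ > 0 and x₁x₂ + 1 < 0} of the fixed locus of complex conjugation is a bijection from S onto ℝ². In other words, this component of the fixed locus is a section of the Lagrangian fibration f(z₁,z₂) = ((|z₁|²−|z₂|²)/2, log|z₁z₂+1|). -/

import Mathlib

/-!
On `S` put `p = x₁x₂ < -1`. The map `(x₁, x₂) ↦ (x₁, p)` identifies `S` with
`(0, ∞) × (-∞, -1)`, and in these coordinates `f` becomes triangular: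
`(x₁, p) ↦ ((x₁² - (p/x₁)²)/2, log |p + 1|)`. The second component is a bijection
`(-∞, -1) → ℝ`, and for each fixed `p ≠ 0` the first one is strictly increasing on
`(0, ∞)` and onto `ℝ`, with inverse `a ↦ √(a + √(a² + p²))`.
-/

open Set Real

/-- The nodal fibration restricted to real points:
`f(x₁,x₂) = ((x₁² − x₂²)/2, log |x₁x₂ + 1|)`. -/
noncomputable def f4 (x : ℝ × ℝ) : ℝ × ℝ :=
  ((x.1 ^ 2 - x.2 ^ 2) / 2, Real.log |x.1 * x.2 + 1|)

theorem Set.BijOn.prod_of_fiberwise {α β γ δ : Type*} {s : Set α} {s' : Set β} {t : Set γ}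
    {t' : Set δ} {g : β → α → γ} {h : β → δ} (hg : ∀ p ∈ s', BijOn (g p) s t)
    (hh : BijOn h s' t') :
    BijOn (fun q : α × β => (g q.2 q.1, h q.2)) (s ×ˢ s') (t ×ˢ t') := by
  refine ⟨fun q hq => ⟨(hg _ hq.2).mapsTo hq.1, hh.mapsTo hq.2⟩, ?_, ?_⟩
  · rintro ⟨u, p⟩ ⟨hu, hp⟩ ⟨v, q⟩ ⟨hv, hq⟩ he
    simp only [Prod.mk.injEq] at he
    obtain rfl : p = q := hh.injOn hp hq he.2
    obtain rfl : u = v := (hg p hp).injOn hu hv he.1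
    rfl
  · rintro ⟨a, b⟩ ⟨ha, hb⟩
    obtain ⟨p, hp, rfl⟩ := hh.surjOn hb
    obtain ⟨u, hu, rfl⟩ := (hg p hp).surjOn ha
    exact ⟨(u, p), ⟨hu, hp⟩, rfl⟩

theorem strictMonoOn_sq_sub_div_sq (c : ℝ) :
    StrictMonoOn (fun x : ℝ => (x ^ 2 - (c / x) ^ 2) / 2) (Ioi 0) := by
  intro x (hx : 0 < x) y (hy : 0 < y) hxy
  have hsq : x ^ 2 < y ^ 2 := by gcongr
  have hdiv : (c / y) ^ 2 ≤ (c / x) ^ 2 := by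
    rw [div_pow, div_pow]
    gcongr
  simp only
  linarith

theorem surjOn_sq_sub_div_sq {c : ℝ} (hc : c ≠ 0) :
    SurjOn (fun x : ℝ => (x ^ 2 - (c / x) ^ 2) / 2) (Ioi 0) univ := by
  intro a _
  set r := √(a ^ 2 + c ^ 2)
  have hr : r ^ 2 = a ^ 2 + c ^ 2 := sq_sqrt (by positivity)
  have hr_pos : 0 ≤ r := sqrt_nonneg _
  have ht : 0 < a + r := by nlinarith [sq_pos_of_ne_zero hc]
  refine ⟨√(a + r), sqrt_pos.mpr ht, ?_⟩
  simp only [div_pow, sq_sqrt ht.le]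
  field_simp
  nlinarith

theorem bijOn_sq_sub_div_sq {c : ℝ} (hc : c ≠ 0) :
    BijOn (fun x : ℝ => (x ^ 2 - (c / x) ^ 2) / 2) (Ioi 0) univ :=
  ⟨mapsTo_univ _ _, (strictMonoOn_sq_sub_div_sq c).injOn, surjOn_sq_sub_div_sq hc⟩

theorem bijOn_log_abs_add_one : BijOn (fun p : ℝ => log |p + 1|) (Iio (-1)) univ := by
  refine InvOn.bijOn (f' := fun b => -1 - exp b) ⟨?_, ?_⟩ (mapsTo_univ _ _) ?_
  · intro p (hp : p < -1)
    have hp' : 0 < |p + 1| := abs_pos.mpr (by linarith)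
    simp only
    rw [exp_log hp', abs_of_neg (show p + 1 < 0 by linarith)]
    ring
  · intro b _
    simp only [show -1 - exp b + 1 = -exp b by ring, abs_neg, abs_exp, log_exp]
  · intro b _
    simp only [mem_Iio]
    linarith [exp_pos b]

theorem bijOn_fst_fst_mul_snd :
    BijOn (fun x : ℝ × ℝ => (x.1, x.1 * x.2)) {x | 0 < x.1 ∧ x.1 * x.2 + 1 < 0}
      (Ioi 0 ×ˢ Iio (-1)) := by
  refine InvOn.bijOn (f' := fun q => (q.1, q.2 / q.1)) ⟨?_, ?_⟩ ?_ ?_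
  · rintro ⟨x₁, x₂⟩ ⟨hx₁, -⟩
    simp [mul_div_cancel_left₀ x₂ hx₁.ne']
  · rintro ⟨u, p⟩ ⟨hu, -⟩
    simp [mul_div_cancel₀ p hu.ne']
  · rintro ⟨x₁, x₂⟩ ⟨hx₁, hx⟩
    exact ⟨hx₁, show x₁ * x₂ < -1 by linarith⟩
  · rintro ⟨u, p⟩ ⟨hu, hp : p < -1⟩
    refine ⟨hu, ?_⟩
    rw [mul_div_cancel₀ p hu.ne']
    linarith

/-- The connected component `S = {x₁ > 0, x₁x₂ + 1 < 0}` of the fixed locus of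
conjugation maps bijectively onto `ℝ²`: it is a section of the nodal fibration. -/
theorem stmt4 :
    Set.BijOn f4 {x : ℝ × ℝ | 0 < x.1 ∧ x.1 * x.2 + 1 < 0} Set.univ := by
  have triangular := BijOn.prod_of_fiberwise
    (fun p (hp : p < -1) => bijOn_sq_sub_div_sq (by linarith))
    bijOn_log_abs_add_one
  rw [univ_prod_univ] at triangular
  refine (triangular.comp bijOn_fst_fst_mul_snd).congr ?_
  rintro ⟨x₁, x₂⟩ ⟨hx₁, -⟩
  simp [f4, mul_div_cancel_left₀ x₂ hx₁.ne']
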